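/- Let C₀ > 0 be a constant, n and m integers with C₀·n ≤ m ≤ exp(n/C₀), Δ := C₀·√(log m), and let x₁, …, x_m ∈ ℝⁿ be a quasi-orthogonal system. For every η ∈ (0,1), with t = 0.02, the truncated cone C₋′(η) satisfies both inclusions C₋′(η) ⊆ C₋(η) and C₋′(η) ⊆ C₊(η). -/

import Mathlib

open MeasureTheory RealInnerProductSpace Pointwise

/-- The distinguished direction `e₀` in `ℝ^{n+1}`; we identify `ℝⁿ` with the hyperplane
`{x : ⟨x, e₀⟩ = 0}`. -/
noncomputable def e0 (n : ℕ) : EuclideanSpace ℝ (Fin (n + 1)) :=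
  EuclideanSpace.single 0 1

/-- A quasi-orthogonal system `x₁, …, x_m ∈ ℝⁿ` (realized inside the hyperplane
`{x : ⟨x, e₀⟩ = 0}` of `ℝ^{n+1}`) with parameter `Δ`:
`√n/(2Δ) ≤ ‖x i‖ ≤ 2√n/Δ` for all `i` and `|⟨x i, x j⟩| ≤ √n/Δ` for all `i ≠ j`. -/
noncomputable def QuasiOrthH (n : ℕ) (Δ : ℝ) {m : ℕ}
    (x : Fin m → EuclideanSpace ℝ (Fin (n + 1))) : Prop :=
  (∀ i, ⟪x i, e0 n⟫ = 0) ∧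
  (∀ i, Real.sqrt n / (2 * Δ) ≤ ‖x i‖ ∧ ‖x i‖ ≤ 2 * Real.sqrt n / Δ) ∧
  ∀ i j, i ≠ j → |⟪x i, x j⟫| ≤ Real.sqrt n / Δ

/-- `Q = conv{±x_i : i ∈ [m]}`. -/
def Qbody {d m : ℕ} (x : Fin m → EuclideanSpace ℝ (Fin d)) :
    Set (EuclideanSpace ℝ (Fin d)) :=
  convexHull ℝ (Set.range x ∪ Set.range (fun i => -x i))

/-- The Euclidean unit ball `B₂ⁿ` of the hyperplane `{y : ⟨y, e₀⟩ = 0}` of `ℝ^{n+1}`. -/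
noncomputable def ballH (n : ℕ) : Set (EuclideanSpace ℝ (Fin (n + 1))) :=
  Metric.closedBall 0 1 ∩ {y | ⟪y, e0 n⟫ = 0}

/-- `Q_t = conv((1/t) Q ∪ B₂ⁿ)`, formed inside the hyperplane `{y : ⟨y, e₀⟩ = 0}`. -/
noncomputable def QtH (n : ℕ) {m : ℕ} (x : Fin m → EuclideanSpace ℝ (Fin (n + 1)))
    (t : ℝ) : Set (EuclideanSpace ℝ (Fin (n + 1))) :=
  convexHull ℝ ((1 / t) • Qbody x ∪ ballH n)

/-- The polar `L° = {y : ⟨y, z⟩ ≤ 1 for all z ∈ L}` taken inside the hyperplane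
`ℝⁿ = {y : ⟨y, e₀⟩ = 0}` of `ℝ^{n+1}`. -/
noncomputable def polarH (n : ℕ) (L : Set (EuclideanSpace ℝ (Fin (n + 1)))) :
    Set (EuclideanSpace ℝ (Fin (n + 1))) :=
  {y | ⟪y, e0 n⟫ = 0 ∧ ∀ z ∈ L, ⟪y, z⟫ ≤ 1}

/-- `K(η, κ) = conv(((1−η)e₀ + Q) ∪ (−κη e₀ + κ Q₁°))`. -/
noncomputable def Kbody (n : ℕ) {m : ℕ}
    (x : Fin m → EuclideanSpace ℝ (Fin (n + 1))) (η κ : ℝ) :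
    Set (EuclideanSpace ℝ (Fin (n + 1))) :=
  convexHull ℝ
    (((fun v => (1 - η) • e0 n + v) '' Qbody x) ∪
      ((fun v => (-(κ * η)) • e0 n + κ • v) '' polarH n (QtH n x 1)))

/-- `K = conv((e₀ + Q) ∪ Q₁°) ⊆ ℝ^{n+1}`. -/
noncomputable def Kbase (n : ℕ) {m : ℕ}
    (x : Fin m → EuclideanSpace ℝ (Fin (n + 1))) :
    Set (EuclideanSpace ℝ (Fin (n + 1))) :=
  convexHull ℝ (((fun v => e0 n + v) '' Qbody x) ∪ polarH n (QtH n x 1))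

/-- The cone `C₊(η) = {y : y₀ ≤ 1/(1−η), y_⊥ ∈ (1−(1−η)y₀) Q°}`, where `y₀ = ⟨y, e₀⟩` and
`y_⊥ = y − y₀ e₀`. -/
noncomputable def Cplus (n : ℕ) {m : ℕ}
    (x : Fin m → EuclideanSpace ℝ (Fin (n + 1))) (η : ℝ) :
    Set (EuclideanSpace ℝ (Fin (n + 1))) :=
  {y | ⟪y, e0 n⟫ ≤ 1 / (1 - η) ∧
    y - ⟪y, e0 n⟫ • e0 n ∈ (1 - (1 - η) * ⟪y, e0 n⟫) • polarH n (Qbody x)}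

/-- The cone `C₋(η) = {y : −1/η ≤ y₀, y_⊥ ∈ (1+η y₀) Q₁}`. -/
noncomputable def Cminus (n : ℕ) {m : ℕ}
    (x : Fin m → EuclideanSpace ℝ (Fin (n + 1))) (η : ℝ) :
    Set (EuclideanSpace ℝ (Fin (n + 1))) :=
  {y | -(1 / η) ≤ ⟪y, e0 n⟫ ∧
    y - ⟪y, e0 n⟫ • e0 n ∈ (1 + η * ⟪y, e0 n⟫) • QtH n x 1}

/-- The truncated cone `C₋′(η) = {y : −1/η ≤ y₀ ≤ 0.98, y_⊥ ∈ (1+η y₀) Q_t°}`, `t = 0.02`. -/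
noncomputable def CminusPrime (n : ℕ) {m : ℕ}
    (x : Fin m → EuclideanSpace ℝ (Fin (n + 1))) (η : ℝ) :
    Set (EuclideanSpace ℝ (Fin (n + 1))) :=
  {y | -(1 / η) ≤ ⟪y, e0 n⟫ ∧ ⟪y, e0 n⟫ ≤ (0.98 : ℝ) ∧
    y - ⟪y, e0 n⟫ • e0 n ∈ (1 + η * ⟪y, e0 n⟫) • polarH n (QtH n x (0.02 : ℝ))}

/-!
Both inclusions are elementary facts about polars. Since `B₂ⁿ ⊆ Q_t`, we get `Q_t° ⊆ B₂ⁿ ⊆ Q₁`,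
which gives `C₋′(η) ⊆ C₋(η)`. Since `(1/t)·Q ⊆ Q_t`, we get `Q_t° ⊆ t·Q°`, so a point of
`C₋′(η)` has `y_⊥ ∈ (1 + η y₀) t · Q°`; on the slab `−1/η ≤ y₀ ≤ 0.98` the factor `(1 + η y₀) t`
lies between `0` and `1 − (1 − η) y₀`, and `Q°` is star-shaped about `0`.
-/

theorem StarConvex.smul_mem_smul_set_of_le {𝕜 E : Type*} [Field 𝕜] [LinearOrder 𝕜]
    [IsStrictOrderedRing 𝕜] [AddCommGroup E] [Module 𝕜 E] {s : Set E} (hs : StarConvex 𝕜 0 s)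
    {a b : 𝕜} (ha : 0 ≤ a) (hab : a ≤ b) (hb : 0 < b) {v : E} (hv : v ∈ s) :
    a • v ∈ b • s := by
  refine ⟨(a / b) • v, hs.smul_mem hv (div_nonneg ha hb.le) ((div_le_one hb).2 hab), ?_⟩
  simp only [smul_smul, mul_div_cancel₀ a hb.ne']

section Polar

variable {n : ℕ}

theorem zero_mem_polarH (L : Set (EuclideanSpace ℝ (Fin (n + 1)))) : 0 ∈ polarH n L :=
  ⟨inner_zero_left _, fun z _ => by rw [inner_zero_left]; exact zero_le_one⟩

theorem convex_polarH (L : Set (EuclideanSpace ℝ (Fin (n + 1)))) : Convex ℝ (polarH n L) := by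
  rintro y ⟨hy₀, hyL⟩ y' ⟨hy₀', hyL'⟩ a b ha hb hab
  refine ⟨?_, fun z hz => ?_⟩
  · rw [inner_add_left, real_inner_smul_left, real_inner_smul_left, hy₀, hy₀']
    ring
  · rw [inner_add_left, real_inner_smul_left, real_inner_smul_left]
    nlinarith [hyL z hz, hyL' z hz]

theorem starConvex_polarH (L : Set (EuclideanSpace ℝ (Fin (n + 1)))) :
    StarConvex ℝ 0 (polarH n L) :=
  (convex_polarH L).starConvex (zero_mem_polarH L)

theorem polarH_subset_ballH {L : Set (EuclideanSpace ℝ (Fin (n + 1)))} (hL : ballH n ⊆ L) :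
    polarH n L ⊆ ballH n := by
  rintro y ⟨hy₀, hyL⟩
  refine ⟨Metric.mem_closedBall.2 ?_, hy₀⟩
  rw [dist_zero_right]
  rcases eq_or_ne y 0 with rfl | hy
  · simp
  have hny : 0 < ‖y‖ := norm_pos_iff.2 hy
  have hunit : ‖y‖⁻¹ • y ∈ ballH n := by
    refine ⟨?_, ?_⟩
    · rw [Metric.mem_closedBall, dist_zero_right, norm_smul, norm_inv, norm_norm,
        inv_mul_cancel₀ hny.ne']
    · show ⟪‖y‖⁻¹ • y, e0 n⟫ = 0
      rw [real_inner_smul_left, hy₀, mul_zero]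
  have h := hyL _ (hL hunit)
  rwa [real_inner_smul_right, real_inner_self_eq_norm_sq, sq, ← mul_assoc,
    inv_mul_cancel₀ hny.ne', one_mul] at h

theorem smul_mem_polarH_of_mem_polarH_smul {L : Set (EuclideanSpace ℝ (Fin (n + 1)))} (c : ℝ)
    {y : EuclideanSpace ℝ (Fin (n + 1))} (hy : y ∈ polarH n (c • L)) : c • y ∈ polarH n L := by
  obtain ⟨hy₀, hyL⟩ := hy
  refine ⟨by rw [real_inner_smul_left, hy₀, mul_zero], fun z hz => ?_⟩
  rw [real_inner_smul_left, ← real_inner_smul_right]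
  exact hyL _ (Set.smul_mem_smul_set hz)

end Polar

section Cones

variable {n m : ℕ} (x : Fin m → EuclideanSpace ℝ (Fin (n + 1)))

theorem ballH_subset_QtH (t : ℝ) : ballH n ⊆ QtH n x t :=
  Set.subset_union_right.trans (subset_convexHull ℝ _)

theorem smul_Qbody_subset_QtH (t : ℝ) : (1 / t) • Qbody x ⊆ QtH n x t :=
  Set.subset_union_left.trans (subset_convexHull ℝ _)

theorem one_div_smul_mem_polarH_Qbody {t : ℝ} {y : EuclideanSpace ℝ (Fin (n + 1))}
    (hy : y ∈ polarH n (QtH n x t)) : (1 / t) • y ∈ polarH n (Qbody x) :=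
  smul_mem_polarH_of_mem_polarH_smul _ ⟨hy.1, fun z hz => hy.2 z (smul_Qbody_subset_QtH x t hz)⟩

theorem CminusPrime_subset_Cminus (η : ℝ) : CminusPrime n x η ⊆ Cminus n x η := by
  rintro y ⟨hlow, -, hy⟩
  exact ⟨hlow, Set.smul_set_mono
    ((polarH_subset_ballH (ballH_subset_QtH x _)).trans (ballH_subset_QtH x 1)) hy⟩

theorem CminusPrime_subset_Cplus {η : ℝ} (hη₀ : 0 < η) (hη₁ : η < 1) :
    CminusPrime n x η ⊆ Cplus n x η := by
  rintro y ⟨hlow, hhigh, w, hw, hwy⟩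
  beta_reduce at hwy
  set y₀ := ⟪y, e0 n⟫
  have ha : 0 ≤ 1 + η * y₀ := by
    have := mul_le_mul_of_nonneg_left hlow hη₀.le
    rw [mul_neg, mul_one_div_cancel hη₀.ne'] at this
    linarith
  have hb : 0 < 1 - (1 - η) * y₀ := by
    nlinarith [mul_le_mul_of_nonneg_left hhigh (sub_nonneg.2 hη₁.le)]
  -- equivalently `y₀ (1 - 0.98 η) ≤ 0.98`
  have hab : (1 + η * y₀) * 0.02 ≤ 1 - (1 - η) * y₀ := by
    nlinarith [mul_le_mul_of_nonneg_right hhigh (by linarith : (0 : ℝ) ≤ 1 - 0.98 * η)]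
  refine ⟨hhigh.trans ?_, ?_⟩
  · rw [le_div_iff₀ (sub_pos.2 hη₁)]
    nlinarith
  · have hw' : (1 + η * y₀) • w = ((1 + η * y₀) * 0.02) • ((1 / (0.02 : ℝ)) • w) := by
      rw [smul_smul, mul_assoc]
      norm_num
    rw [← hwy, hw']
    exact (starConvex_polarH _).smul_mem_smul_set_of_le (by positivity) hab hb
      (one_div_smul_mem_polarH_Qbody x hw)

end Cones

theorem stmt_15_general (n m : ℕ)
    (x : Fin m → EuclideanSpace ℝ (Fin (n + 1)))
    (η : ℝ) (hη₀ : 0 < η) (hη₁ : η < 1) :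
    CminusPrime n x η ⊆ Cminus n x η ∧ CminusPrime n x η ⊆ Cplus n x η :=
  ⟨CminusPrime_subset_Cminus x η, CminusPrime_subset_Cplus x hη₀ hη₁⟩

/-- For every `η ∈ (0,1)`, the truncated cone `C₋′(η)` is contained both in `C₋(η)` and
in `C₊(η)`. -/
theorem stmt_15 (C₀ : ℝ) (hC₀ : 0 < C₀) (n m : ℕ)
    (hm₁ : C₀ * (n : ℝ) ≤ (m : ℝ)) (hm₂ : (m : ℝ) ≤ Real.exp ((n : ℝ) / C₀))
    (x : Fin m → EuclideanSpace ℝ (Fin (n + 1)))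
    (hx : QuasiOrthH n (C₀ * Real.sqrt (Real.log m)) x)
    (η : ℝ) (hη₀ : 0 < η) (hη₁ : η < 1) :
    CminusPrime n x η ⊆ Cminus n x η ∧ CminusPrime n x η ⊆ Cplus n x η :=
  stmt_15_general n m x η hη₀ hη₁
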